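/- Let V be a symmetric positive-definite real 3×3 matrix and let ê₁, ê₂ be orthonormal unit vectors in ℝ³. For a nonzero vector w, write R_π[w] := −I + 2 (w⊗w)/|w|² for the 180° rotation about w. (a) If ( R_π[V^{-1}ê₁] · R_π[V^{-1}ê₂] )² = I, then ê₁ · V^{-2} ê₂ = 0; equivalently, if λ₁, λ₂, λ₃ are the eigenvalues of V with orthonormal eigenvectors v̂₁, v̂₂, v̂₃, then Σ_{i=1}^{3} λᵢ^{-2} (v̂ᵢ·ê₁)(v̂ᵢ·ê₂) = 0 (necessary condition for a four-fold martensitic cluster with all Type-I interfaces). (b) If ( R_π[Vê₁] · R_π[Vê₂] )² = I, then ê₁ · V² ê₂ = 0, equivalently Σ_{i=1}^{3} λᵢ² (v̂ᵢ·ê₁)(v̂ᵢ·ê₂) = 0 (necessary condition for a four-fold cluster with all Type-II interfaces). -/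

import Mathlib

open Matrix

noncomputable section

abbrev V3 : Type := Fin 3 → ℝ
abbrev M3 : Type := Matrix (Fin 3) (Fin 3) ℝ

/-- Rank-one matrix `a ⊗ n` with entries `aᵢ nⱼ`. -/
def outer (a n : V3) : M3 := Matrix.vecMulVec a n

/-- The 180° rotation about a nonzero vector `w`. -/
def Rpi (w : V3) : M3 := -1 + (2 / (w ⬝ᵥ w)) • outer w w

lemma outer_mul_outer (a b c d : V3) :
    outer a b * outer c d = (b ⬝ᵥ c) • outer a d := by
  ext i j
  simp only [outer, Matrix.mul_apply, vecMulVec_apply, Matrix.smul_apply, smul_eq_mul,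
    dotProduct, Finset.sum_mul]
  refine Finset.sum_congr rfl fun k _ => by ring

lemma expand_Rpi (c1 c2 : ℝ) (P Q : M3) :
    (-1 + c1 • P) * (-1 + c2 • Q) = 1 - c1 • P - c2 • Q + (c1 * c2) • (P * Q) := by
  simp only [add_mul, mul_add, neg_one_mul, mul_neg_one, neg_neg, smul_mul_assoc,
    mul_smul_comm, smul_add, smul_neg, smul_smul, neg_add, mul_comm c2 c1]
  abel

lemma Rpi_invol (w : V3) (hw : w ⬝ᵥ w ≠ 0) : Rpi w * Rpi w = 1 := by
  unfold Rpi
  rw [expand_Rpi, outer_mul_outer, smul_smul]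
  have hc : 2 / (w ⬝ᵥ w) * (2 / (w ⬝ᵥ w)) * (w ⬝ᵥ w) = 2 / (w ⬝ᵥ w) + 2 / (w ⬝ᵥ w) := by
    have : ∀ d : ℝ, d ≠ 0 → 2 / d * (2 / d) * d = 2 / d + 2 / d := by
      intro d hd; field_simp; ring
    exact this _ hw
  rw [hc, add_smul]
  abel

lemma comm_of_sq (R S : M3) (hR : R * R = 1) (hS : S * S = 1)
    (h : (R * S) ^ 2 = 1) : R * S = S * R := by
  have h2 : R * ((R * S) * (R * S)) * S = R * 1 * S := by rw [← sq, h]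
  rw [show R * ((R * S) * (R * S)) * S = (R * R) * (S * R) * (S * S) by
    simp only [mul_assoc], hR, hS, one_mul, mul_one, mul_one] at h2
  exact h2.symm

lemma cancel_aux (a b X Y : M3) (h : 1 - a - b + X = 1 - b - a + Y) : X = Y := by
  rw [sub_right_comm 1 b a] at h
  exact add_left_cancel h

/-- Key orthogonality: if `(R_π[Ae₁] R_π[Ae₂])² = 1` for symmetric PD `A`
and orthonormal `e₁, e₂`, then `Ae₁ ⊥ Ae₂`. -/
lemma key_orth (A : M3) (hA : A.PosDef) (e1 e2 : V3)
    (he1 : e1 ⬝ᵥ e1 = 1) (he2 : e2 ⬝ᵥ e2 = 1) (he12 : e1 ⬝ᵥ e2 = 0)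
    (h : (Rpi (A *ᵥ e1) * Rpi (A *ᵥ e2)) ^ 2 = 1) :
    (A *ᵥ e1) ⬝ᵥ (A *ᵥ e2) = 0 := by
  have hdet : IsUnit A.det := isUnit_iff_ne_zero.mpr hA.det_pos.ne'
  have hcancel : ∀ x : V3, A⁻¹ *ᵥ (A *ᵥ x) = x := by
    intro x
    rw [mulVec_mulVec, nonsing_inv_mul A hdet, one_mulVec]
  have he1' : e1 ≠ 0 := by
    intro h0; rw [h0] at he1; simp at he1
  have he2' : e2 ≠ 0 := by
    intro h0; rw [h0] at he2; simp at he2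
  set w1 := A *ᵥ e1 with hw1def
  set w2 := A *ᵥ e2 with hw2def
  have hw1 : w1 ≠ 0 := fun h0 => he1' (by rw [← hcancel e1, ← hw1def, h0, mulVec_zero])
  have hw2 : w2 ≠ 0 := fun h0 => he2' (by rw [← hcancel e2, ← hw2def, h0, mulVec_zero])
  have hw11 : w1 ⬝ᵥ w1 ≠ 0 := fun h0 => hw1 (dotProduct_self_eq_zero.mp h0)
  have hw22 : w2 ⬝ᵥ w2 ≠ 0 := fun h0 => hw2 (dotProduct_self_eq_zero.mp h0)
  by_contra hs
  -- the rotations commute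
  have hcomm := comm_of_sq _ _ (Rpi_invol w1 hw11) (Rpi_invol w2 hw22) h
  unfold Rpi at hcomm
  rw [expand_Rpi, expand_Rpi] at hcomm
  have h4 := cancel_aux _ _ _ _ hcomm
  rw [outer_mul_outer, outer_mul_outer, smul_smul, smul_smul,
    dotProduct_comm w2 w1] at h4
  have hc1 : (2 : ℝ) / (w1 ⬝ᵥ w1) ≠ 0 := by positivity
  have hc2 : (2 : ℝ) / (w2 ⬝ᵥ w2) ≠ 0 := by positivity
  have hcoef : 2 / (w1 ⬝ᵥ w1) * (2 / (w2 ⬝ᵥ w2)) * (w1 ⬝ᵥ w2) ≠ 0 :=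
    mul_ne_zero (mul_ne_zero hc1 hc2) hs
  have hcoef' : 2 / (w2 ⬝ᵥ w2) * (2 / (w1 ⬝ᵥ w1)) * (w1 ⬝ᵥ w2)
      = 2 / (w1 ⬝ᵥ w1) * (2 / (w2 ⬝ᵥ w2)) * (w1 ⬝ᵥ w2) := by ring
  rw [hcoef'] at h4
  have houter : outer w1 w2 = outer w2 w1 := smul_right_injective M3 hcoef h4
  have hpar : ∀ i j, w1 i * w2 j = w2 i * w1 j := by
    intro i j
    have := congrFun (congrFun houter i) j
    simpa [outer, vecMulVec_apply] using this
  obtain ⟨k, hk⟩ : ∃ k, w1 k ≠ 0 := by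
    by_contra hno
    push_neg at hno
    exact hw1 (funext fun k => hno k)
  have hw2eq : w2 = (w2 k / w1 k) • w1 := by
    funext j
    have := hpar k j
    simp only [Pi.smul_apply, smul_eq_mul]
    field_simp
    linarith [hpar k j]
  have he2eq : e2 = (w2 k / w1 k) • e1 := by
    have hA2 : A *ᵥ e2 = A *ᵥ ((w2 k / w1 k) • e1) := by
      rw [mulVec_smul, ← hw1def, ← hw2def]; exact hw2eq
    rw [← hcancel e2, hA2, hcancel]
  rw [he2eq] at he12 he2
  have ht : w2 k / w1 k = 0 := by
    have : e1 ⬝ᵥ (w2 k / w1 k) • e1 = (w2 k / w1 k) * (e1 ⬝ᵥ e1) := by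
      simp [dotProduct, Finset.mul_sum]
      exact Finset.sum_congr rfl fun i _ => by ring
    rw [this, he1, mul_one] at he12
    exact he12
  rw [ht, zero_smul] at he2
  simp [dotProduct] at he2

/-- Spectral expansion of `e₁ ⬝ (W² e₂)` in an orthonormal eigenbasis. -/
lemma spectral (W : M3) (l : Fin 3 → ℝ) (v : Fin 3 → V3)
    (heig : ∀ i, W *ᵥ (v i) = l i • v i)
    (hunit : ∀ i, v i ⬝ᵥ v i = 1)
    (horth : ∀ i j, i ≠ j → v i ⬝ᵥ v j = 0)
    (e1 e2 : V3) :
    e1 ⬝ᵥ (W * W) *ᵥ e2 = ∑ i, (l i) ^ 2 * (v i ⬝ᵥ e1) * (v i ⬝ᵥ e2) := by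
  have hbasis : ∀ x : V3, x = ∑ i, (v i ⬝ᵥ x) • v i := by
    intro x
    set Q : M3 := Matrix.of (fun i => v i) with hQ
    have hQQ : Q * Qᵀ = 1 := by
      ext i j
      rw [Matrix.mul_apply]
      by_cases hij : i = j
      · subst hij
        simpa [hQ, dotProduct, Matrix.one_apply] using hunit i
      · simp only [Matrix.one_apply, if_neg hij]
        simpa [hQ, dotProduct] using horth i j hij
    have hQQ' : Qᵀ * Q = 1 := mul_eq_one_comm.mp hQQ
    funext j
    have hx : x = (Qᵀ * Q) *ᵥ x := by rw [hQQ', one_mulVec]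
    calc x j = ((Qᵀ * Q) *ᵥ x) j := by rw [← hx]
    _ = (Qᵀ *ᵥ (Q *ᵥ x)) j := by rw [mulVec_mulVec]
    _ = (∑ i, (v i ⬝ᵥ x) • v i) j := by
        simp only [Matrix.mulVec, hQ, dotProduct, Matrix.transpose_apply, Matrix.of_apply,
          Finset.sum_apply, Pi.smul_apply, smul_eq_mul, Finset.mul_sum, Finset.sum_mul]
        exact Finset.sum_congr rfl fun i _ => Finset.sum_congr rfl fun m _ => by ring
  have hWx : ∀ (c : Fin 3 → ℝ), W *ᵥ (∑ i, c i • v i) = ∑ i, (c i * l i) • v i := by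
    intro c
    rw [show W *ᵥ (∑ i, c i • v i) = W.mulVecLin (∑ i, c i • v i) from rfl, map_sum]
    refine Finset.sum_congr rfl fun i _ => ?_
    rw [_root_.map_smul, mulVecLin_apply, heig, smul_smul]
  have h1 : W *ᵥ e2 = ∑ i, ((v i ⬝ᵥ e2) * l i) • v i := by
    calc W *ᵥ e2 = W *ᵥ (∑ i, (v i ⬝ᵥ e2) • v i) := by rw [← hbasis e2]
    _ = ∑ i, ((v i ⬝ᵥ e2) * l i) • v i := hWx _
  have h2 : W *ᵥ (W *ᵥ e2) = ∑ i, ((v i ⬝ᵥ e2) * l i * l i) • v i := by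
    rw [h1, hWx]
  have hdot : ∀ (c : Fin 3 → ℝ), e1 ⬝ᵥ (∑ i, c i • v i) = ∑ i, c i * (e1 ⬝ᵥ v i) := by
    intro c
    simp only [dotProduct, Finset.sum_apply, Pi.smul_apply, smul_eq_mul, Finset.mul_sum]
    rw [Finset.sum_comm]
    exact Finset.sum_congr rfl fun i _ => Finset.sum_congr rfl fun m _ => by ring
  rw [← mulVec_mulVec, h2, hdot]
  exact Finset.sum_congr rfl fun i _ => by
    rw [dotProduct_comm e1 (v i)]
    ring

/-- **Necessary condition for four-fold martensitic clusters.** For `V`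
symmetric positive definite with eigendata `(λᵢ, v̂ᵢ)` and orthonormal
`ê₁ ⊥ ê₂`:
(a) if `(R_π[V⁻¹ê₁] R_π[V⁻¹ê₂])² = I` then `ê₁ · V⁻²ê₂ = 0`, equivalently
`Σᵢ λᵢ⁻² (v̂ᵢ·ê₁)(v̂ᵢ·ê₂) = 0` (all Type-I interfaces);
(b) if `(R_π[Vê₁] R_π[Vê₂])² = I` then `ê₁ · V²ê₂ = 0`, equivalently
`Σᵢ λᵢ² (v̂ᵢ·ê₁)(v̂ᵢ·ê₂) = 0` (all Type-II interfaces). -/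
theorem fourfold_cluster_necessary
    (V : M3) (hV : V.PosDef)
    (e1 e2 : V3) (he1 : e1 ⬝ᵥ e1 = 1) (he2 : e2 ⬝ᵥ e2 = 1)
    (he12 : e1 ⬝ᵥ e2 = 0)
    (l : Fin 3 → ℝ) (v : Fin 3 → V3)
    (heig : ∀ i, V.mulVec (v i) = l i • v i)
    (hunit : ∀ i, v i ⬝ᵥ v i = 1)
    (horth : ∀ i j, i ≠ j → v i ⬝ᵥ v j = 0) :
    ((Rpi ((V⁻¹).mulVec e1) * Rpi ((V⁻¹).mulVec e2)) ^ 2 = 1 →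
      e1 ⬝ᵥ (V⁻¹ * V⁻¹).mulVec e2 = 0 ∧
      ∑ i, (1 / (l i) ^ 2) * (v i ⬝ᵥ e1) * (v i ⬝ᵥ e2) = 0) ∧
    ((Rpi (V.mulVec e1) * Rpi (V.mulVec e2)) ^ 2 = 1 →
      e1 ⬝ᵥ (V * V).mulVec e2 = 0 ∧
      ∑ i, (l i) ^ 2 * (v i ⬝ᵥ e1) * (v i ⬝ᵥ e2) = 0) := by
  have hdet : IsUnit V.det := isUnit_iff_ne_zero.mpr hV.det_pos.ne'
  have hlpos : ∀ i, 0 < l i := by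
    intro i
    have hvne : v i ≠ 0 := fun h0 => by
      have := hunit i; rw [h0] at this; simp [dotProduct] at this
    have hpd := hV.dotProduct_mulVec_pos hvne
    have : v i ⬝ᵥ V *ᵥ (v i) = l i := by
      rw [heig i]
      have : v i ⬝ᵥ l i • v i = l i * (v i ⬝ᵥ v i) := by
        simp [dotProduct, Finset.mul_sum]
        exact Finset.sum_congr rfl fun m _ => by ring
      rw [this, hunit i, mul_one]
    have hstar : star (v i) = v i := by simp
    rw [hstar, this] at hpd
    exact hpd
  have heig' : ∀ i, (V⁻¹) *ᵥ (v i) = (1 / l i) • v i := by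
    intro i
    have hli : l i ≠ 0 := (hlpos i).ne'
    have h1 : V⁻¹ *ᵥ (V *ᵥ (v i)) = v i := by
      rw [mulVec_mulVec, nonsing_inv_mul V hdet, one_mulVec]
    rw [heig i, mulVec_smul] at h1
    have h2 := congrArg (fun x => (1 / l i) • x) h1
    simp only [mulVec_smul, smul_smul, one_div] at h2
    rw [inv_mul_cancel₀ hli, one_smul] at h2
    rw [h2, one_div]
  constructor
  · intro h
    have horth0 := key_orth (V⁻¹) hV.inv e1 e2 he1 he2 he12 h
    have hsym : (V⁻¹)ᵀ = V⁻¹ := by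
      ext i j
      have h1 := congrFun (congrFun hV.inv.isHermitian i) j
      simpa [Matrix.conjTranspose_apply] using h1
    have hv : e1 ᵥ* V⁻¹ = V⁻¹ *ᵥ e1 := by rw [← vecMul_transpose, hsym]
    have hmain : e1 ⬝ᵥ (V⁻¹ * V⁻¹) *ᵥ e2 = 0 := by
      rw [← mulVec_mulVec, dotProduct_mulVec, hv]
      exact horth0
    refine ⟨hmain, ?_⟩
    have := spectral (V⁻¹) (fun i => 1 / l i) v heig' hunit horth e1 e2
    rw [hmain] at this
    simp only [div_pow, one_pow] at this
    exact this.symm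
  · intro h
    have horth0 := key_orth V hV e1 e2 he1 he2 he12 h
    have hsym : Vᵀ = V := by
      ext i j
      have h1 := congrFun (congrFun hV.isHermitian i) j
      simpa [Matrix.conjTranspose_apply] using h1
    have hv : e1 ᵥ* V = V *ᵥ e1 := by rw [← vecMul_transpose, hsym]
    have hmain : e1 ⬝ᵥ (V * V) *ᵥ e2 = 0 := by
      rw [← mulVec_mulVec, dotProduct_mulVec, hv]
      exact horth0
    refine ⟨hmain, ?_⟩
    have := spectral V l v heig hunit horth e1 e2
    rw [hmain] at this
    exact this.symm
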